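/- For n ≥ 1 and S = e_1 + ⋯ + e_n ∈ Cl(n), each of the two eigenspaces ker(M_S − √n) and ker(M_S + √n) of right multiplication by S has dimension 2^(n−1) as a real vector space. -/

import Mathlib

open scoped BigOperators

/-- `Cl n`: the real Clifford algebra of the standard positive definite quadratic form on `ℝⁿ`. -/
noncomputable abbrev Cl (n : ℕ) : Type :=
  CliffordAlgebra (QuadraticMap.weightedSumSquares ℝ (fun _ : Fin n => (1 : ℝ)))

/-- The orthonormal generators `e i` of `Cl n`, satisfying `e i ^ 2 = 1`, `e i * e j = - e j * e i`. -/
noncomputable def e (n : ℕ) (i : Fin n) : Cl n :=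
  CliffordAlgebra.ι _ (Pi.single i 1)

/-- `S = e 1 + ⋯ + e n`. -/
noncomputable def S (n : ℕ) : Cl n := ∑ i, e n i

namespace ClAux

noncomputable abbrev Qn (n : ℕ) : QuadraticForm ℝ (Fin n → ℝ) :=
  QuadraticMap.weightedSumSquares ℝ (fun _ : Fin n => (1 : ℝ))

lemma Qn_apply (n : ℕ) (v : Fin n → ℝ) : Qn n v = ∑ i, v i * v i := by
  rw [QuadraticMap.weightedSumSquares_apply]; simp

lemma e_mul_self (n : ℕ) (i : Fin n) : e n i * e n i = 1 := by
  rw [e, CliffordAlgebra.ι_sq_scalar]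
  have : Qn n (Pi.single i 1) = 1 := by
    rw [Qn_apply]
    rw [Finset.sum_eq_single i (fun j _ hj => by rw [Pi.single_eq_of_ne hj, mul_zero])
      (by simp)]
    simp
  rw [this, map_one]

lemma e_anticomm {n : ℕ} {i j : Fin n} (h : i ≠ j) : e n i * e n j = -(e n j * e n i) := by
  have key : e n i * e n j + e n j * e n i = 0 := by
    rw [e, e, CliffordAlgebra.ι_mul_ι_add_swap]
    have : QuadraticMap.polar (⇑(Qn n)) (Pi.single i 1) (Pi.single j 1) = 0 := by
      rw [QuadraticMap.polar, Qn_apply, Qn_apply, Qn_apply, ← Finset.sum_sub_distrib,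
        ← Finset.sum_sub_distrib]
      refine Finset.sum_eq_zero fun k _ => ?_
      rcases eq_or_ne k i with rfl | hki
      · rw [Pi.add_apply, Pi.single_eq_same, Pi.single_eq_of_ne h]
        ring
      · rw [Pi.add_apply, Pi.single_eq_of_ne hki]
        rcases eq_or_ne k j with rfl | hkj
        · rw [Pi.single_eq_same]; ring
        · rw [Pi.single_eq_of_ne hkj]; ring
    rw [this, map_zero]
  exact eq_neg_of_add_eq_zero_left key

lemma S_eq (n : ℕ) : S n = CliffordAlgebra.ι (Qn n) (fun _ => (1 : ℝ)) := by
  rw [S]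
  unfold e
  rw [← map_sum]
  congr 1
  exact Finset.univ_sum_single (fun _ => (1 : ℝ))

lemma S_mul_S (n : ℕ) : S n * S n = algebraMap ℝ (Cl n) (n : ℝ) := by
  rw [S_eq, CliffordAlgebra.ι_sq_scalar]
  congr 1
  rw [Qn_apply]
  simp

end ClAux

namespace ClAux

variable {n : ℕ}

/-- Toggle membership of `i` in `A`. -/
def flip (i : Fin n) (A : Finset (Fin n)) : Finset (Fin n) :=
  if i ∈ A then A.erase i else insert i A

/-- The sign `(-1)^#{k ∈ A | k < i}`. -/
def sgn (i : Fin n) (A : Finset (Fin n)) : ℝ :=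
  (-1) ^ (A.filter (· < i)).card

lemma mem_flip {a i : Fin n} {A : Finset (Fin n)} :
    a ∈ flip i A ↔ (a = i ∧ i ∉ A) ∨ (a ≠ i ∧ a ∈ A) := by
  unfold flip
  split_ifs with h
  · simp only [Finset.mem_erase]
    constructor
    · rintro ⟨h1, h2⟩; exact Or.inr ⟨h1, h2⟩
    · rintro (⟨rfl, h2⟩ | ⟨h1, h2⟩); · exact absurd h h2
      · exact ⟨h1, h2⟩
  · simp only [Finset.mem_insert]
    constructor
    · rintro (rfl | h1)
      · exact Or.inl ⟨rfl, h⟩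
      · exact Or.inr ⟨fun hai => h (hai ▸ h1), h1⟩
    · rintro (⟨rfl, _⟩ | ⟨_, h2⟩); · exact Or.inl rfl
      · exact Or.inr h2

lemma flip_flip (i : Fin n) (A : Finset (Fin n)) : flip i (flip i A) = A := by
  unfold flip
  by_cases h : i ∈ A
  · rw [if_pos h, if_neg (Finset.notMem_erase i A), Finset.insert_erase h]
  · rw [if_neg h, if_pos (Finset.mem_insert_self i A), Finset.erase_insert h]

lemma flip_comm {i j : Fin n} (h : i ≠ j) (A : Finset (Fin n)) :
    flip i (flip j A) = flip j (flip i A) := by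
  ext a
  simp only [mem_flip]
  by_cases hai : a = i <;> by_cases haj : a = j <;> by_cases hiA : i ∈ A <;>
    by_cases hjA : j ∈ A <;> simp_all

lemma sgn_flip_of_lt {i j : Fin n} (hij : i < j) (A : Finset (Fin n)) :
    sgn j (flip i A) = -sgn j A := by
  unfold sgn flip
  by_cases h : i ∈ A
  · rw [if_pos h, Finset.filter_erase]
    have hi : i ∈ A.filter (· < j) := Finset.mem_filter.2 ⟨h, hij⟩
    rw [← Finset.card_erase_add_one hi, pow_succ]
    ring
  · rw [if_neg h, Finset.filter_insert, if_pos hij,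
      Finset.card_insert_of_notMem (fun hm => h (Finset.mem_filter.1 hm).1), pow_succ]
    ring

lemma sgn_flip_of_ge {i j : Fin n} (hij : ¬ i < j) (A : Finset (Fin n)) :
    sgn j (flip i A) = sgn j A := by
  unfold sgn flip
  by_cases h : i ∈ A
  · rw [if_pos h, Finset.filter_erase,
      Finset.erase_eq_of_notMem (s := A.filter (· < j)) (a := i)
        (fun hm => hij (Finset.mem_filter.1 hm).2)]
  · rw [if_neg h, Finset.filter_insert, if_neg hij]

lemma sgn_mul_self (i : Fin n) (A : Finset (Fin n)) : sgn i A * sgn i A = 1 := by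
  unfold sgn
  rw [← mul_pow, neg_mul_neg, one_mul, one_pow]

/-- The fermionic operator for `e i` acting on `Finset (Fin n) → ℝ`. -/
noncomputable def Lop (i : Fin n) : (Finset (Fin n) → ℝ) →ₗ[ℝ] (Finset (Fin n) → ℝ) where
  toFun f := fun A => sgn i A * f (flip i A)
  map_add' f g := by funext A; simp [mul_add]
  map_smul' c f := by funext A; simp [smul_eq_mul]; ring

lemma Lop_apply (i : Fin n) (f : Finset (Fin n) → ℝ) (A : Finset (Fin n)) :
    Lop i f A = sgn i A * f (flip i A) := rfl

lemma Lop_Lop_self (i : Fin n) : (Lop i * Lop i : Module.End ℝ _) = 1 := by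
  refine LinearMap.ext fun f => funext fun A => ?_
  rw [Module.End.mul_apply, Lop_apply, Lop_apply, flip_flip,
    sgn_flip_of_ge (lt_irrefl i), ← mul_assoc, sgn_mul_self, one_mul]
  rfl

lemma Lop_anticomm {i j : Fin n} (h : i ≠ j) :
    (Lop i * Lop j : Module.End ℝ _) = -(Lop j * Lop i) := by
  refine LinearMap.ext fun f => funext fun A => ?_
  rw [LinearMap.neg_apply, Pi.neg_apply, Module.End.mul_apply, Module.End.mul_apply,
    Lop_apply, Lop_apply, Lop_apply, Lop_apply, flip_comm h]
  have hsign : sgn i A * sgn j (flip i A) = -(sgn j A * sgn i (flip j A)) := by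
    rcases h.lt_or_gt with hij | hji
    · rw [sgn_flip_of_lt hij, sgn_flip_of_ge (not_lt_of_gt hij)]
      ring
    · rw [sgn_flip_of_ge (not_lt_of_gt hji), sgn_flip_of_lt hji]
      ring
  linear_combination (f (flip j (flip i A))) * hsign

end ClAux

namespace ClAux

variable {n : ℕ}

/-- The linear map `v ↦ ∑ vᵢ Lᵢ` defining the spinor-type representation. -/
noncomputable def fmap (n : ℕ) : (Fin n → ℝ) →ₗ[ℝ] Module.End ℝ (Finset (Fin n) → ℝ) :=
  ∑ i, (LinearMap.proj i).smulRight (Lop i)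

lemma fmap_apply (v : Fin n → ℝ) : fmap n v = ∑ i, v i • Lop i := by
  simp [fmap]

lemma fmap_cond (v : Fin n → ℝ) :
    fmap n v * fmap n v = algebraMap ℝ (Module.End ℝ (Finset (Fin n) → ℝ)) (Qn n v) := by
  classical
  set a : Fin n → Fin n → Module.End ℝ (Finset (Fin n) → ℝ) :=
    fun i j => (v i * v j) • (Lop i * Lop j) with ha
  have anti : ∀ i j : Fin n, i ≠ j → a i j = -a j i := by
    intro i j h
    rw [ha]
    simp only
    rw [Lop_anticomm h, smul_neg, mul_comm (v i)]
  have expand : fmap n v * fmap n v = ∑ i, ∑ j, a i j := by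
    rw [fmap_apply, Finset.sum_mul_sum]
    refine Finset.sum_congr rfl fun i _ => Finset.sum_congr rfl fun j _ => ?_
    rw [ha]
    simp only
    rw [smul_mul_assoc, mul_smul_comm, smul_smul]
  have diagsum : ∑ i, ∑ j, a i j = ∑ i, a i i := by
    have h2 : (2 : ℝ) • (∑ i, ∑ j, a i j) = (2 : ℝ) • (∑ i, a i i) := by
      have hswap : ∑ i, ∑ j, a i j = ∑ i, ∑ j, a j i := Finset.sum_comm
      calc (2 : ℝ) • (∑ i, ∑ j, a i j)
          = (∑ i, ∑ j, a i j) + (∑ i, ∑ j, a j i) := by rw [← hswap, two_smul]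
        _ = ∑ i, ∑ j, (a i j + a j i) := by
            rw [← Finset.sum_add_distrib]
            exact Finset.sum_congr rfl fun i _ => (Finset.sum_add_distrib).symm
        _ = ∑ i, (a i i + a i i) := by
            refine Finset.sum_congr rfl fun i _ => ?_
            refine Finset.sum_eq_single i (fun j _ hj => ?_)
              (fun hi => absurd (Finset.mem_univ i) hi)
            rw [anti i j (Ne.symm hj), neg_add_cancel]
        _ = (2 : ℝ) • (∑ i, a i i) := by
            rw [Finset.smul_sum]
            exact Finset.sum_congr rfl fun i _ => (two_smul ℝ (a i i)).symm
    have h3 := congrArg (fun m : Module.End ℝ (Finset (Fin n) → ℝ) => ((2 : ℝ)⁻¹) • m) h2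
    simpa [smul_smul] using h3
  rw [expand, diagsum, Module.algebraMap_end_eq_smul_id, Qn_apply]
  have : ∀ i : Fin n, a i i = (v i * v i) • (1 : Module.End ℝ (Finset (Fin n) → ℝ)) := by
    intro i; rw [ha]; simp only; rw [Lop_Lop_self]
  rw [Finset.sum_congr rfl fun i _ => this i, ← Finset.sum_smul]
  rfl

/-- The representation of `Cl n` on `Finset (Fin n) → ℝ`. -/
noncomputable def ρ (n : ℕ) : Cl n →ₐ[ℝ] Module.End ℝ (Finset (Fin n) → ℝ) :=
  CliffordAlgebra.lift (Qn n) ⟨fmap n, fmap_cond⟩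

lemma ρ_e (i : Fin n) : ρ n (e n i) = Lop i := by
  rw [e, ρ, CliffordAlgebra.lift_ι_apply, fmap_apply]
  rw [Finset.sum_eq_single i (fun j _ hj => by rw [Pi.single_eq_of_ne hj, zero_smul]) (by simp)]
  rw [Pi.single_eq_same, one_smul]

lemma Lop_single (i : Fin n) (A : Finset (Fin n)) :
    Lop i (Pi.single A 1) = sgn i (flip i A) • (Pi.single (flip i A) 1 : Finset (Fin n) → ℝ) := by
  funext B
  rw [Lop_apply, Pi.smul_apply, smul_eq_mul]
  by_cases hB : B = flip i A
  · subst hB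
    rw [flip_flip, Pi.single_eq_same, Pi.single_eq_same, sgn_flip_of_ge (lt_irrefl i)]
  · have h1 : flip i B ≠ A := fun h => hB (by rw [← h, flip_flip])
    rw [Pi.single_eq_of_ne h1, Pi.single_eq_of_ne hB, mul_zero, mul_zero]

lemma Lop_single_lower {i : Fin n} {A : Finset (Fin n)} (hA : ∀ a ∈ A, i < a) :
    Lop i (Pi.single A 1) = Pi.single (insert i A) (1 : ℝ) := by
  have hiA : i ∉ A := fun h => lt_irrefl i (hA i h)
  have hf : flip i A = insert i A := if_neg hiA
  rw [Lop_single, hf]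
  have hs : sgn i (insert i A) = 1 := by
    unfold sgn
    rw [Finset.filter_insert, if_neg (lt_irrefl i),
      Finset.filter_eq_empty_iff.2 (fun {a} ha hlt => absurd (hA a ha) (asymm hlt)),
      Finset.card_empty, pow_zero]
  rw [hs, one_smul]

lemma ρ_word : ∀ (l : List (Fin n)), l.Pairwise (· < ·) →
    ρ n ((l.map (e n)).prod) (Pi.single ∅ 1) = Pi.single l.toFinset (1 : ℝ) := by
  intro l
  induction l with
  | nil => intro _; simp
  | cons i t ih =>
    intro hp
    rw [List.map_cons, List.prod_cons, map_mul, Module.End.mul_apply, ih (List.Pairwise.of_cons hp),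
      ρ_e, Lop_single_lower (fun a ha => (List.pairwise_cons.1 hp).1 a (List.mem_toFinset.1 ha)),
      List.toFinset_cons]

end ClAux

namespace ClAux

variable {n : ℕ}

/-- The ordered product `e_{a₁} ⋯ e_{a_k}` over the elements of `A` in increasing order. -/
noncomputable def eProd (n : ℕ) (A : Finset (Fin n)) : Cl n :=
  ((A.sort (· ≤ ·)).map (e n)).prod

lemma single_smul_one {I : Type*} [DecidableEq I] (i : I) (c : ℝ) :
    (Pi.single i c : I → ℝ) = c • (Pi.single i 1 : I → ℝ) := by
  funext j
  rcases eq_or_ne j i with rfl | h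
  · simp
  · simp [Pi.single_eq_of_ne h]

lemma eProd_of_pairwise {m : List (Fin n)} (hm : m.Pairwise (· < ·)) :
    ((m.map (e n)).prod) = eProd n m.toFinset := by
  have hnodup : m.Nodup := hm.imp ne_of_lt
  have hperm : (m.toFinset.sort (· ≤ ·)).Perm m :=
    List.perm_of_nodup_nodup_toFinset_eq (Finset.sort_nodup _ _) hnodup
      (Finset.sort_toFinset _ _)
  have heq : m.toFinset.sort (· ≤ ·) = m :=
    List.Perm.eq_of_pairwise' (Finset.pairwise_sort _ _) (hm.imp le_of_lt) hperm
  rw [eProd, heq]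

lemma key_mul (j : Fin n) : ∀ (l : List (Fin n)), l.Pairwise (· < ·) →
    ∃ (c : ℝ) (m : List (Fin n)), m.Pairwise (· < ·) ∧ (∀ x ∈ m, x = j ∨ x ∈ l) ∧
      e n j * (l.map (e n)).prod = c • (m.map (e n)).prod := by
  intro l
  induction l with
  | nil =>
    intro _
    exact ⟨1, [j], List.pairwise_singleton _ _, fun x hx => Or.inl (List.mem_singleton.1 hx),
      by simp⟩
  | cons i t ih =>
    intro hp
    have hit : ∀ x ∈ t, i < x := (List.pairwise_cons.1 hp).1
    rcases lt_trichotomy j i with hji | rfl | hij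
    · refine ⟨1, j :: i :: t, ?_, ?_, ?_⟩
      · refine List.pairwise_cons.2 ⟨?_, hp⟩
        intro a ha
        rcases List.mem_cons.1 ha with rfl | hat
        · exact hji
        · exact hji.trans (hit a hat)
      · intro x hx
        rcases List.mem_cons.1 hx with rfl | hx'
        · exact Or.inl rfl
        · exact Or.inr hx'
      · simp [List.prod_cons]
    · refine ⟨1, t, List.Pairwise.of_cons hp, fun x hx => Or.inr (List.mem_cons_of_mem _ hx), ?_⟩
      rw [one_smul, List.map_cons, List.prod_cons, ← mul_assoc, e_mul_self, one_mul]
    · obtain ⟨c, m, hm, hmem, heq⟩ := ih (List.Pairwise.of_cons hp)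
      refine ⟨-c, i :: m, ?_, ?_, ?_⟩
      · refine List.pairwise_cons.2 ⟨?_, hm⟩
        intro a ha
        rcases hmem a ha with rfl | hat
        · exact hij
        · exact hit a hat
      · intro x hx
        rcases List.mem_cons.1 hx with rfl | hx'
        · exact Or.inr List.mem_cons_self
        · rcases hmem x hx' with rfl | hxt
          · exact Or.inl rfl
          · exact Or.inr (List.mem_cons_of_mem _ hxt)
      · rw [List.map_cons, List.prod_cons, ← mul_assoc,
          e_anticomm (ne_of_gt hij), neg_mul, mul_assoc, heq, mul_smul_comm, neg_smul,
          List.map_cons, List.prod_cons]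

lemma span_top (x : Cl n) : x ∈ Submodule.span ℝ (Set.range (eProd n)) := by
  set W := Submodule.span ℝ (Set.range (eProd n)) with hW
  have hW1 : (1 : Cl n) ∈ W := by
    have h1 : eProd n (∅ : Finset (Fin n)) = 1 := by
      rw [eProd, Finset.sort_empty, List.map_nil, List.prod_nil]
    exact h1 ▸ Submodule.subset_span ⟨∅, rfl⟩
  have hgen : ∀ (i : Fin n), ∀ w ∈ W, e n i * w ∈ W := by
    intro i w hw
    refine Submodule.span_induction ?_ ?_ ?_ ?_ hw
    · rintro _ ⟨A, rfl⟩
      obtain ⟨c, m, hm, _, heq⟩ := key_mul i (A.sort (· ≤ ·)) (Finset.sortedLT_sort A).pairwise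
      rw [eProd, heq, eProd_of_pairwise hm]
      exact Submodule.smul_mem _ _ (Submodule.subset_span ⟨m.toFinset, rfl⟩)
    · rw [mul_zero]; exact Submodule.zero_mem _
    · intro a b _ _ ha hb; rw [mul_add]; exact Submodule.add_mem _ ha hb
    · intro r a _ ha; rw [mul_smul_comm]; exact Submodule.smul_mem _ _ ha
  have hmul : ∀ x : Cl n, ∀ w ∈ W, x * w ∈ W := by
    intro x
    refine CliffordAlgebra.induction ?_ ?_ ?_ ?_ x
    · intro r w hw
      rw [← Algebra.smul_def]
      exact Submodule.smul_mem _ _ hw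
    · intro v w hw
      have hv : CliffordAlgebra.ι (Qn n) v = ∑ i, v i • e n i := by
        conv_lhs => rw [← Finset.univ_sum_single v]
        rw [map_sum]
        refine Finset.sum_congr rfl fun i _ => ?_
        rw [single_smul_one i (v i), map_smul, e]
      show CliffordAlgebra.ι (Qn n) v * w ∈ W
      rw [hv, Finset.sum_mul]
      refine Submodule.sum_mem _ fun i _ => ?_
      rw [smul_mul_assoc]
      exact Submodule.smul_mem _ _ (hgen i w hw)
    · intro a b ha hb w hw
      rw [mul_assoc]
      exact ha _ (hb _ hw)
    · intro a b ha hb w hw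
      rw [add_mul]
      exact Submodule.add_mem _ (ha _ hw) (hb _ hw)
  simpa using hmul x 1 hW1

/-- The module map `(Finset (Fin n) → ℝ) → Cl n` sending `δ_A` to `eProd A`. -/
noncomputable def ψ (n : ℕ) : (Finset (Fin n) → ℝ) →ₗ[ℝ] Cl n where
  toFun f := ∑ A, f A • eProd n A
  map_add' f g := by simp [add_smul, Finset.sum_add_distrib]
  map_smul' c f := by simp [Finset.smul_sum, smul_smul]

lemma ψ_single (A : Finset (Fin n)) : ψ n (Pi.single A 1) = eProd n A := by
  show (∑ B, (Pi.single A 1 : Finset (Fin n) → ℝ) B • eProd n B) = eProd n A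
  rw [Finset.sum_eq_single A
    (fun B _ hB => by rw [Pi.single_eq_of_ne hB, zero_smul])
    (fun h => absurd (Finset.mem_univ A) h)]
  rw [Pi.single_eq_same, one_smul]

lemma ψ_surjective : Function.Surjective (ψ n) := by
  rw [← LinearMap.range_eq_top]
  rw [eq_top_iff]
  intro x _
  refine Submodule.span_le.2 ?_ (span_top x)
  rintro _ ⟨A, rfl⟩
  exact ⟨Pi.single A 1, ψ_single A⟩

lemma finite_Cl (n : ℕ) : Module.Finite ℝ (Cl n) :=
  Module.Finite.of_surjective (ψ n) ψ_surjective

/-- Evaluation of the representation at the vacuum `δ_∅`, as a linear map. -/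
noncomputable def Φ (n : ℕ) : Cl n →ₗ[ℝ] (Finset (Fin n) → ℝ) :=
  (LinearMap.applyₗ (Pi.single ∅ (1 : ℝ))).comp (ρ n).toLinearMap

lemma Φ_eProd (A : Finset (Fin n)) : Φ n (eProd n A) = Pi.single A 1 := by
  show ρ n (eProd n A) (Pi.single ∅ 1) = _
  rw [eProd, ρ_word _ (Finset.sortedLT_sort A).pairwise, Finset.sort_toFinset]

lemma Φ_surjective : Function.Surjective (Φ n) := by
  rw [← LinearMap.range_eq_top, eq_top_iff]
  intro f _
  have hf : f = ∑ A, f A • (Pi.single A 1 : Finset (Fin n) → ℝ) := by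
    conv_lhs => rw [← Finset.univ_sum_single f]
    refine Finset.sum_congr rfl fun A _ => ?_
    rw [single_smul_one A (f A)]
  rw [hf]
  exact Submodule.sum_mem _ fun A _ =>
    Submodule.smul_mem _ _ ⟨eProd n A, Φ_eProd A⟩

lemma dim_Cl (n : ℕ) : Module.finrank ℝ (Cl n) = 2 ^ n := by
  haveI := finite_Cl n
  have hF : Module.finrank ℝ (Finset (Fin n) → ℝ) = 2 ^ n := by
    rw [Module.finrank_pi, Fintype.card_finset, Fintype.card_fin]
  refine le_antisymm ?_ ?_
  · have h := LinearMap.finrank_range_le (ψ n)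
    rwa [LinearMap.range_eq_top.2 ψ_surjective, finrank_top, hF] at h
  · have h := LinearMap.finrank_range_le (Φ n)
    rwa [LinearMap.range_eq_top.2 Φ_surjective, finrank_top, hF] at h

end ClAux

namespace ClAux

variable {n : ℕ}

lemma T_T (x : Cl n) :
    LinearMap.mulRight ℝ (S n) (LinearMap.mulRight ℝ (S n) x) = (n : ℝ) • x := by
  rw [LinearMap.mulRight_apply, LinearMap.mulRight_apply, mul_assoc, S_mul_S,
    Algebra.algebraMap_eq_smul_one, mul_smul_comm, mul_one]

lemma involute_S (n : ℕ) : CliffordAlgebra.involute (S n) = -(S n) := by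
  rw [S, map_sum, ← Finset.sum_neg_distrib]
  exact Finset.sum_congr rfl fun i _ => CliffordAlgebra.involute_ι _

end ClAux

open ClAux in
/-- For `n ≥ 1`, both eigenspaces of right multiplication by `S` (for eigenvalues `±√n`)
have real dimension `2^(n-1)`. -/
theorem eigenspace_dim (n : ℕ) (hn : 1 ≤ n) :
    Module.finrank ℝ
      (LinearMap.ker (LinearMap.mulRight ℝ (S n) - Real.sqrt n • LinearMap.id)) = 2 ^ (n - 1) ∧
    Module.finrank ℝ
      (LinearMap.ker (LinearMap.mulRight ℝ (S n) + Real.sqrt n • LinearMap.id)) = 2 ^ (n - 1) := by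
  classical
  haveI : Module.Finite ℝ (Cl n) := finite_Cl n
  set c : ℝ := Real.sqrt n with hc
  have hcpos : (0 : ℝ) < c :=
    Real.sqrt_pos.2 (by exact_mod_cast Nat.lt_of_lt_of_le Nat.zero_lt_one hn)
  have hc2 : c * c = (n : ℝ) := Real.mul_self_sqrt (Nat.cast_nonneg n)
  have mulSS : ∀ x : Cl n, (x * S n) * S n = (n : ℝ) • x := by
    intro x
    rw [mul_assoc, S_mul_S, Algebra.algebraMap_eq_smul_one, mul_smul_comm, mul_one]
  set Kp : Submodule ℝ (Cl n) :=
    LinearMap.ker (LinearMap.mulRight ℝ (S n) - c • LinearMap.id) with hKp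
  set Km : Submodule ℝ (Cl n) :=
    LinearMap.ker (LinearMap.mulRight ℝ (S n) + c • LinearMap.id) with hKm
  have memp : ∀ x : Cl n, x ∈ Kp ↔ x * S n = c • x := by
    intro x
    rw [hKp, LinearMap.mem_ker, LinearMap.sub_apply, LinearMap.smul_apply, LinearMap.id_apply,
      sub_eq_zero, LinearMap.mulRight_apply]
  have memm : ∀ x : Cl n, x ∈ Km ↔ x * S n = -(c • x) := by
    intro x
    rw [hKm, LinearMap.mem_ker, LinearMap.add_apply, LinearMap.smul_apply, LinearMap.id_apply,
      add_eq_zero_iff_eq_neg, LinearMap.mulRight_apply]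
  have hdisj : Disjoint Kp Km := by
    rw [Submodule.disjoint_def]
    intro x hxp hxm
    have h12 : c • x = -(c • x) := ((memp x).1 hxp).symm.trans ((memm x).1 hxm)
    have h3 : (c + c) • x = 0 := by
      rw [add_smul]
      nth_rewrite 1 [h12]
      exact neg_add_cancel _
    exact (smul_eq_zero.1 h3).resolve_left (by positivity)
  have hcodis : Codisjoint Kp Km := by
    rw [codisjoint_iff, eq_top_iff]
    intro x _
    have ha : (2 * c)⁻¹ • (c • x + x * S n) ∈ Kp := by
      rw [memp, smul_mul_assoc, add_mul, smul_mul_assoc, mulSS, ← hc2]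
      match_scalars <;> ring
    have hb : (2 * c)⁻¹ • (c • x - x * S n) ∈ Km := by
      rw [memm, smul_mul_assoc, sub_mul, smul_mul_assoc, mulSS, ← hc2]
      match_scalars <;> ring
    refine Submodule.mem_sup.2 ⟨_, ha, _, hb, ?_⟩
    rw [← smul_add]
    have hsum2 : (c • x + x * S n) + (c • x - x * S n) = (2 * c) • x := by
      match_scalars <;> ring
    rw [hsum2, smul_smul, inv_mul_cancel₀ (by positivity), one_smul]
  have hcompl : IsCompl Kp Km := ⟨hdisj, hcodis⟩
  have hinv : Function.Involutive ⇑(CliffordAlgebra.involute (Q := Qn n)).toLinearMap :=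
    fun x => CliffordAlgebra.involute_involute x
  set ι : Cl n ≃ₗ[ℝ] Cl n := LinearEquiv.ofInvolutive _ hinv with hι
  have hmap : Submodule.map (ι : Cl n →ₗ[ℝ] Cl n) Kp = Km := by
    ext y
    constructor
    · rintro ⟨x, hx, rfl⟩
      have h1 := (memp x).1 hx
      have h2 : CliffordAlgebra.involute (x * S n) = CliffordAlgebra.involute (c • x) :=
        congrArg _ h1
      rw [map_mul, involute_S, map_smul, mul_neg] at h2
      show CliffordAlgebra.involute x ∈ Km
      rw [memm]
      exact neg_eq_iff_eq_neg.1 h2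
    · intro hy
      have h1 := (memm y).1 hy
      refine ⟨CliffordAlgebra.involute y, ?_, hinv y⟩
      have h2 : CliffordAlgebra.involute (y * S n) = CliffordAlgebra.involute (-(c • y)) :=
        congrArg _ h1
      rw [map_mul, involute_S, map_neg, map_smul, mul_neg] at h2
      exact (memp _).2 (neg_injective h2)
  have heqdim : Module.finrank ℝ Kp = Module.finrank ℝ Km := by
    rw [← hmap, LinearEquiv.finrank_map_eq]
  have hsum : Module.finrank ℝ Kp + Module.finrank ℝ Km = 2 ^ n := by
    rw [Submodule.finrank_add_eq_of_isCompl hcompl, dim_Cl]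
  have hpow : 2 ^ n = 2 * 2 ^ (n - 1) := by
    conv_lhs => rw [show n = (n - 1) + 1 by omega]
    rw [pow_succ]
    ring
  exact ⟨by omega, by omega⟩
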